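/- arXiv:2212.13385 — 4 statements merged into one kernel-verified Lean document; each statement's English description precedes it below -/
import Mathlib

section
/- Let α, θ1, θ2, θ3 > 0 and define F̄(x1,x2) = exp(−(θ1+θ3)x1^α − θ2 x2^α) when x1 ≥ x2 and exp(−θ1 x1^α − (θ2+θ3)x2^α) when x1 ≤ x2, for x1, x2 ≥ 0. Then F̄((x1^α + t^α)^{1/α}, (x2^α + t^α)^{1/α}) = F̄(x1,x2) · F̄(t,t) for all x1, x2, t ≥ 0. -/
theorem marshall_olkin_weibull_fe
    (α θ1 θ2 θ3 : ℝ) (hα : 0 < α) (h1 : 0 < θ1) (h2 : 0 < θ2) (h3 : 0 < θ3)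
    (F : ℝ → ℝ → ℝ)
    (hF : ∀ x1 x2 : ℝ, 0 ≤ x1 → 0 ≤ x2 →
      F x1 x2 = if x2 ≤ x1 then Real.exp (-(θ1 + θ3) * x1 ^ α - θ2 * x2 ^ α)
                else Real.exp (-θ1 * x1 ^ α - (θ2 + θ3) * x2 ^ α)) :
    ∀ x1 x2 t : ℝ, 0 ≤ x1 → 0 ≤ x2 → 0 ≤ t →
      F ((x1 ^ α + t ^ α) ^ (1 / α)) ((x2 ^ α + t ^ α) ^ (1 / α))
        = F x1 x2 * F t t := by
  intro x1 x2 t hx1 hx2 ht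
  have hs1 : (0:ℝ) ≤ x1 ^ α + t ^ α :=
    add_nonneg (Real.rpow_nonneg hx1 α) (Real.rpow_nonneg ht α)
  have hs2 : (0:ℝ) ≤ x2 ^ α + t ^ α :=
    add_nonneg (Real.rpow_nonneg hx2 α) (Real.rpow_nonneg ht α)
  have hpow : ∀ s : ℝ, 0 ≤ s → (s ^ (1 / α)) ^ α = s := by
    intro s hs
    rw [← Real.rpow_mul hs, one_div, inv_mul_cancel₀ hα.ne', Real.rpow_one]
  have hinv : ∀ s : ℝ, 0 ≤ s → (s ^ α) ^ (1 / α) = s := by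
    intro s hs
    rw [← Real.rpow_mul hs, mul_one_div, div_self hα.ne', Real.rpow_one]
  have e1 : ((x1 ^ α + t ^ α) ^ (1 / α)) ^ α = x1 ^ α + t ^ α := hpow _ hs1
  have e2 : ((x2 ^ α + t ^ α) ^ (1 / α)) ^ α = x2 ^ α + t ^ α := hpow _ hs2
  have hcmp : ((x2 ^ α + t ^ α) ^ (1 / α) ≤ (x1 ^ α + t ^ α) ^ (1 / α)) ↔ x2 ≤ x1 := by
    constructor
    · intro h
      have h' := Real.rpow_le_rpow (Real.rpow_nonneg hs2 _) h hα.le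
      rw [e1, e2] at h'
      have h'' : x2 ^ α ≤ x1 ^ α := by linarith
      have := Real.rpow_le_rpow (Real.rpow_nonneg hx2 _) h'' (by positivity : (0:ℝ) ≤ 1/α)
      rwa [hinv _ hx2, hinv _ hx1] at this
    · intro h
      have h' : x2 ^ α ≤ x1 ^ α := Real.rpow_le_rpow hx2 h hα.le
      exact Real.rpow_le_rpow hs2 (by linarith) (by positivity)
  rw [hF _ _ (Real.rpow_nonneg hs1 _) (Real.rpow_nonneg hs2 _), hF _ _ hx1 hx2,
    hF _ _ ht ht, e1, e2]
  simp only [hcmp, le_refl, if_true]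
  by_cases h : x2 ≤ x1
  · rw [if_pos h, if_pos h, ← Real.exp_add]; ring_nf
  · rw [if_neg h, if_neg h, ← Real.exp_add]; ring_nf
end

section
/- Conversely, let F̄₀ : [0,∞) → (0,1] be a continuous strictly decreasing bijection with F̄₀(0)=1, let θ > 0, and let F̄₁, F̄₂ : [0,∞) → (0,1] be arbitrary functions with F̄₁(0)=F̄₂(0)=1. Define F̄(x1,x2) = F̄₁(F̄₀⁻¹(F̄₀(x1)/F̄₀(x2)))·F̄₀(x2)^θ for x1 ≥ x2 and F̄(x1,x2) = F̄₂(F̄₀⁻¹(F̄₀(x2)/F̄₀(x1)))·F̄₀(x1)^θ for x1 ≤ x2. Then F̄ satisfies the functional equation F̄(F̄₀⁻¹(F̄₀(t)F̄₀(x1)), F̄₀⁻¹(F̄₀(t)F̄₀(x2))) = F̄(x1,x2)·F̄₀(t)^θ for all x1, x2, t ≥ 0. -/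
theorem general_solution_satisfies_fe
    (F0 F0inv : ℝ → ℝ) (θ : ℝ) (hθ : 0 < θ)
    (hF0cont : ContinuousOn F0 (Set.Ici (0:ℝ)))
    (hF0anti : StrictAntiOn F0 (Set.Ici (0:ℝ)))
    (hF0zero : F0 0 = 1)
    (hF0maps : ∀ x : ℝ, 0 ≤ x → F0 x ∈ Set.Ioc (0:ℝ) 1)
    (hinv1 : ∀ x : ℝ, 0 ≤ x → F0inv (F0 x) = x)
    (hinv2 : ∀ u ∈ Set.Ioc (0:ℝ) 1, 0 ≤ F0inv u ∧ F0 (F0inv u) = u)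
    (F1 F2 : ℝ → ℝ)
    (hF1 : ∀ x : ℝ, 0 ≤ x → F1 x ∈ Set.Ioc (0:ℝ) 1)
    (hF2 : ∀ x : ℝ, 0 ≤ x → F2 x ∈ Set.Ioc (0:ℝ) 1)
    (hF10 : F1 0 = 1) (hF20 : F2 0 = 1)
    (F : ℝ → ℝ → ℝ)
    (hF : ∀ x1 x2 : ℝ, 0 ≤ x1 → 0 ≤ x2 →
      F x1 x2 = if x2 ≤ x1 then F1 (F0inv (F0 x1 / F0 x2)) * F0 x2 ^ θ
                else F2 (F0inv (F0 x2 / F0 x1)) * F0 x1 ^ θ) :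
    ∀ x1 x2 t : ℝ, 0 ≤ x1 → 0 ≤ x2 → 0 ≤ t →
      F (F0inv (F0 t * F0 x1)) (F0inv (F0 t * F0 x2)) = F x1 x2 * F0 t ^ θ := by
  intro x1 x2 t hx1 hx2 ht
  obtain ⟨ht0, ht1⟩ := hF0maps t ht
  obtain ⟨h10, h11⟩ := hF0maps x1 hx1
  obtain ⟨h20, h21⟩ := hF0maps x2 hx2
  have hm1 : F0 t * F0 x1 ∈ Set.Ioc (0:ℝ) 1 :=
    ⟨mul_pos ht0 h10, mul_le_one₀ ht1 h10.le h11⟩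
  have hm2 : F0 t * F0 x2 ∈ Set.Ioc (0:ℝ) 1 :=
    ⟨mul_pos ht0 h20, mul_le_one₀ ht1 h20.le h21⟩
  obtain ⟨ha0, ha⟩ := hinv2 _ hm1
  obtain ⟨hb0, hb⟩ := hinv2 _ hm2
  set a := F0inv (F0 t * F0 x1)
  set b := F0inv (F0 t * F0 x2)
  have hord : b ≤ a ↔ x2 ≤ x1 := by
    rw [← hF0anti.le_iff_ge ha0 hb0, ha, hb,
      mul_le_mul_iff_right₀ ht0, hF0anti.le_iff_ge hx1 hx2]
  have hdiv1 : F0 a / F0 b = F0 x1 / F0 x2 := by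
    rw [ha, hb, mul_div_mul_left _ _ ht0.ne']
  have hdiv2 : F0 b / F0 a = F0 x2 / F0 x1 := by
    rw [ha, hb, mul_div_mul_left _ _ ht0.ne']
  rw [hF a b ha0 hb0, hF x1 x2 hx1 hx2]
  by_cases h : x2 ≤ x1
  · rw [if_pos h, if_pos (hord.mpr h), hdiv1, hb,
      Real.mul_rpow ht0.le h20.le]
    ring
  · rw [if_neg h, if_neg (fun hc => h (hord.mp hc)), hdiv2, ha,
      Real.mul_rpow ht0.le h10.le]
    ring
end

section
/- Define F̄(x1,x2) = exp(−(x1−x2) − α(x1−x2)² − θ x2) for x1 ≥ x2 ≥ 0 and F̄(x1,x2) = exp(−(x2−x1) − α(x2−x1)² − θ x1) for 0 ≤ x1 ≤ x2, with α = 3/2 and θ = 3. Then the rectangle inequality fails: F̄(1,3) − F̄(2,3) − F̄(1,5) + F̄(2,5) < 0. Hence F̄ is not the joint survival function of any bivariate random vector. -/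
theorem lfr_exponential_not_survival
    (α θ : ℝ) (hα : α = 3 / 2) (hθ : θ = 3)
    (F : ℝ → ℝ → ℝ)
    (hF : ∀ x1 x2 : ℝ, 0 ≤ x1 → 0 ≤ x2 →
      F x1 x2 = if x2 ≤ x1 then Real.exp (-(x1 - x2) - α * (x1 - x2) ^ 2 - θ * x2)
                else Real.exp (-(x2 - x1) - α * (x2 - x1) ^ 2 - θ * x1)) :
    F 1 3 - F 2 3 - F 1 5 + F 2 5 < 0 := by
  subst hα hθ
  have h13 := hF 1 3 (by norm_num) (by norm_num)
  have h23 := hF 2 3 (by norm_num) (by norm_num)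
  have h15 := hF 1 5 (by norm_num) (by norm_num)
  have h25 := hF 2 5 (by norm_num) (by norm_num)
  norm_num at h13 h23 h15 h25
  rw [h13, h23, h15, h25]
  have key : Real.exp (-2.5 : ℝ) < 1/2 := by
    have h1 : Real.exp (-2.5 : ℝ) ≤ Real.exp (-1) :=
      Real.exp_le_exp.mpr (by norm_num)
    have h2 : Real.exp (-1 : ℝ) = 1 / Real.exp 1 := by
      rw [Real.exp_neg]; ring
    have h3 : (2 : ℝ) < Real.exp 1 := by
      have := Real.exp_one_gt_d9; linarith
    rw [h2] at h1
    have : (1 : ℝ) / Real.exp 1 < 1/2 :=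
      div_lt_div_of_pos_left one_pos two_pos h3
    linarith
  have e1 : Real.exp (-11 : ℝ) < Real.exp (-(17/2) : ℝ) / 2 := by
    rw [lt_div_iff₀ (by norm_num)]
    rw [show (-11 : ℝ) = -(17/2) + -2.5 by norm_num, Real.exp_add]
    nlinarith [Real.exp_pos (-(17/2) : ℝ)]
  have e2 : Real.exp (-(45/2) : ℝ) < Real.exp (-(17/2) : ℝ) / 2 := by
    rw [lt_div_iff₀ (by norm_num)]
    rw [show (-(45/2) : ℝ) = -(17/2) + -14 by norm_num, Real.exp_add]
    have h1 : Real.exp (-14 : ℝ) ≤ Real.exp (-2.5) :=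
      Real.exp_le_exp.mpr (by norm_num)
    nlinarith [Real.exp_pos (-(17/2) : ℝ)]
  have e3 := Real.exp_pos (-31 : ℝ)
  linarith
end

section
/- Under the assumptions of the previous statement (F̄₀ a continuous strictly decreasing bijection from [0,∞) onto (0,1] with F̄₀(0)=1; θ, δ1, δ2 > 0 with δ1, δ2 < θ), the function F̄(x1,x2) defined piecewise as F̄₀(x1)^{δ1} F̄₀(x2)^{θ−δ1} for x1 ≥ x2 and F̄₀(x1)^{θ−δ2} F̄₀(x2)^{δ2} for x1 ≤ x2 satisfies F̄(F̄₀⁻¹(F̄₀(t)F̄₀(x1)), F̄₀⁻¹(F̄₀(t)F̄₀(x2))) = F̄(x1,x2)·F̄₀(t)^θ for all x1, x2, t ≥ 0. -/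
theorem bphc_satisfies_fe
    (F0 F0inv : ℝ → ℝ) (θ δ1 δ2 : ℝ)
    (hθ : 0 < θ) (hδ1 : 0 < δ1) (hδ2 : 0 < δ2) (hδ1θ : δ1 < θ) (hδ2θ : δ2 < θ)
    (hF0cont : ContinuousOn F0 (Set.Ici (0:ℝ)))
    (hF0anti : StrictAntiOn F0 (Set.Ici (0:ℝ)))
    (hF0zero : F0 0 = 1)
    (hF0maps : ∀ x : ℝ, 0 ≤ x → F0 x ∈ Set.Ioc (0:ℝ) 1)
    (hinv1 : ∀ x : ℝ, 0 ≤ x → F0inv (F0 x) = x)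
    (hinv2 : ∀ u ∈ Set.Ioc (0:ℝ) 1, 0 ≤ F0inv u ∧ F0 (F0inv u) = u)
    (F : ℝ → ℝ → ℝ)
    (hF : ∀ x1 x2 : ℝ, 0 ≤ x1 → 0 ≤ x2 →
      F x1 x2 = if x2 ≤ x1 then F0 x1 ^ δ1 * F0 x2 ^ (θ - δ1)
                else F0 x1 ^ (θ - δ2) * F0 x2 ^ δ2) :
    ∀ x1 x2 t : ℝ, 0 ≤ x1 → 0 ≤ x2 → 0 ≤ t →
      F (F0inv (F0 t * F0 x1)) (F0inv (F0 t * F0 x2)) = F x1 x2 * F0 t ^ θ := by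
  intro x1 x2 t hx1 hx2 ht
  obtain ⟨h1p, h1le⟩ := hF0maps x1 hx1
  obtain ⟨h2p, h2le⟩ := hF0maps x2 hx2
  obtain ⟨htp, htle⟩ := hF0maps t ht
  have hm1 : F0 t * F0 x1 ∈ Set.Ioc (0:ℝ) 1 :=
    ⟨mul_pos htp h1p, mul_le_one₀ htle h1p.le h1le⟩
  have hm2 : F0 t * F0 x2 ∈ Set.Ioc (0:ℝ) 1 :=
    ⟨mul_pos htp h2p, mul_le_one₀ htle h2p.le h2le⟩
  obtain ⟨hy1nn, hy1F⟩ := hinv2 _ hm1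
  obtain ⟨hy2nn, hy2F⟩ := hinv2 _ hm2
  have horder : (F0inv (F0 t * F0 x2) ≤ F0inv (F0 t * F0 x1)) ↔ x2 ≤ x1 := by
    rw [← hF0anti.le_iff_ge hy1nn hy2nn, hy1F, hy2F,
      mul_le_mul_iff_right₀ htp, hF0anti.le_iff_ge hx1 hx2]
  rw [hF _ _ hy1nn hy2nn, hF _ _ hx1 hx2, hy1F, hy2F]
  by_cases h : x2 ≤ x1
  · rw [if_pos (horder.mpr h), if_pos h,
      Real.mul_rpow htp.le h1p.le, Real.mul_rpow htp.le h2p.le]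
    have hts : F0 t ^ δ1 * F0 t ^ (θ - δ1) = F0 t ^ θ := by
      rw [← Real.rpow_add htp]; ring_nf
    rw [← hts]; ring
  · rw [if_neg (fun hc => h (horder.mp hc)), if_neg h,
      Real.mul_rpow htp.le h1p.le, Real.mul_rpow htp.le h2p.le]
    have hts : F0 t ^ (θ - δ2) * F0 t ^ δ2 = F0 t ^ θ := by
      rw [← Real.rpow_add htp]; ring_nf
    rw [← hts]; ring
end
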